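/- arXiv:2201.09170 — 2 statements merged into one kernel-verified Lean document; each statement's English description precedes it below -/
import Mathlib

section
/- Let R₁, ΔR ∈ SO(3), p₁, v₁, Δp, Δv, g ∈ ℝ³, δt ∈ ℝ, and define R₂ = ΔRᵀ R₁, p₂ = p₁ + δt·v₁ + R₁ᵀ Δp − (δt²/2)·g, v₂ = v₁ + R₁ᵀ Δv − δt·g. Let Φ be the 9×9 block matrix with rows [ΔRᵀ, 0, 0; −R₁ᵀ⌊Δp⌋, I₃, δt·I₃; −R₁ᵀ⌊Δv⌋, 0, I₃]. Then Φ applied to the 9-vector (R₁g, −⌊p₁⌋g, −⌊v₁⌋g) equals (R₂g, −⌊p₂⌋g, −⌊v₂⌋g). -/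
open Matrix

/-- The skew-symmetric cross-product matrix of a vector in ℝ³. -/
def hat (v : Fin 3 → ℝ) : Matrix (Fin 3) (Fin 3) ℝ :=
  !![0, -v 2, v 1; v 2, 0, -v 0; -v 1, v 0, 0]

lemma hat_add (a b : Fin 3 → ℝ) : hat (a + b) = hat a + hat b := by
  ext i j; fin_cases i <;> fin_cases j <;> simp [hat] <;> ring

lemma hat_sub (a b : Fin 3 → ℝ) : hat (a - b) = hat a - hat b := by
  ext i j; fin_cases i <;> fin_cases j <;> simp [hat] <;> ring

lemma hat_smul (c : ℝ) (a : Fin 3 → ℝ) : hat (c • a) = c • hat a := by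
  ext i j; fin_cases i <;> fin_cases j <;> simp [hat] <;> ring

lemma hat_mulVec_self (g : Fin 3 → ℝ) : (hat g).mulVec g = 0 := by
  ext i; fin_cases i <;>
    simp [hat, mulVec, dotProduct, Fin.sum_univ_three] <;> ring

lemma key (M : Matrix (Fin 3) (Fin 3) ℝ) (v : Fin 3 → ℝ) :
    Mᵀ * hat (M.mulVec v) * M = M.det • hat v := by
  ext i j; fin_cases i <;> fin_cases j <;>
    simp [hat, mul_apply, mulVec, dotProduct, Fin.sum_univ_three,
      det_fin_three, transpose_apply] <;> ring

lemma hat_rot (M : Matrix (Fin 3) (Fin 3) ℝ) (hM : M * Mᵀ = 1) (hdet : M.det = 1)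
    (v : Fin 3 → ℝ) : hat (M.mulVec v) = M * hat v * Mᵀ := by
  have h := key M v
  rw [hdet, one_smul] at h
  calc hat (M.mulVec v) = M * (Mᵀ * hat (M.mulVec v) * M) * Mᵀ := by
        rw [← Matrix.mul_assoc, ← Matrix.mul_assoc, hM, Matrix.one_mul,
          Matrix.mul_assoc, hM, Matrix.mul_one]
    _ = M * hat v * Mᵀ := by rw [h]

/-- The state transition matrix propagates the global-yaw unobservable direction. -/
theorem state_transition_propagates_yaw_direction
    (R₁ ΔR : Matrix (Fin 3) (Fin 3) ℝ)
    (hR₁ : R₁ * R₁ᵀ = 1) (hdetR₁ : R₁.det = 1)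
    (hΔR : ΔR * ΔRᵀ = 1) (hdetΔR : ΔR.det = 1)
    (p₁ v₁ Δp Δv g : Fin 3 → ℝ) (δt : ℝ)
    (R₂ : Matrix (Fin 3) (Fin 3) ℝ) (p₂ v₂ : Fin 3 → ℝ)
    (hR₂ : R₂ = ΔRᵀ * R₁)
    (hp₂ : p₂ = p₁ + δt • v₁ + R₁ᵀ.mulVec Δp - (δt ^ 2 / 2) • g)
    (hv₂ : v₂ = v₁ + R₁ᵀ.mulVec Δv - δt • g)
    (Φ : Matrix (Fin 3 ⊕ (Fin 3 ⊕ Fin 3)) (Fin 3 ⊕ (Fin 3 ⊕ Fin 3)) ℝ)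
    (hΦ : Φ = fromBlocks ΔRᵀ 0
            (fromRows (-(R₁ᵀ * hat Δp)) (-(R₁ᵀ * hat Δv)))
            (fromBlocks 1 (δt • 1) 0 1)) :
    Φ.mulVec (Sum.elim (R₁.mulVec g)
        (Sum.elim (-(hat p₁).mulVec g) (-(hat v₁).mulVec g)))
      = Sum.elim (R₂.mulVec g)
        (Sum.elim (-(hat p₂).mulVec g) (-(hat v₂).mulVec g)) := by
  have hRt : R₁ᵀ * R₁ᵀᵀ = 1 := by
    rw [transpose_transpose]; exact mul_eq_one_comm.mp hR₁
  have hdetRt : R₁ᵀ.det = 1 := by rw [det_transpose]; exact hdetR₁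
  have hp : hat (R₁ᵀ.mulVec Δp) = R₁ᵀ * hat Δp * R₁ := by
    have := hat_rot R₁ᵀ hRt hdetRt Δp; rwa [transpose_transpose] at this
  have hv : hat (R₁ᵀ.mulVec Δv) = R₁ᵀ * hat Δv * R₁ := by
    have := hat_rot R₁ᵀ hRt hdetRt Δv; rwa [transpose_transpose] at this
  subst hR₂ hp₂ hv₂ hΦ
  rw [fromBlocks_mulVec, fromRows_mulVec, fromBlocks_mulVec]
  ext (i | i | i) <;>
    simp [hat_add, hat_sub, hat_smul, hp, hv, Matrix.add_mulVec, Matrix.sub_mulVec,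
      Matrix.smul_mulVec, hat_mulVec_self, Matrix.neg_mulVec, mulVec_mulVec,
      Matrix.one_mulVec, Matrix.zero_mulVec, smul_eq_mul, Matrix.mul_assoc] <;>
    ring
end

section
/- Let D be an invertible 3×3 real matrix satisfying D⁻¹ e₁ = (1/d₁) e₁ for some d₁ ≠ 0, let ε ∈ ℝ with d₁ + ε ≠ 0, and let w ∈ ℝ³ with first component w₁ = e₁ᵀ w. Then (D + ε e₁ e₁ᵀ) · (w − (ε d₁ / (d₁ + ε)) · D⁻¹ e₁ · w₁) = D w. -/
open Matrix

/-- Exact degenerate direction for the gyroscope scale parameter `d_{w1}`: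
a perturbation of the (1,1)-entry of `D` is exactly compensated by a bias shift
along `D⁻¹ e₁`, leaving the corrected reading unchanged. -/
theorem dw1_degenerate_direction (D : Matrix (Fin 3) (Fin 3) ℝ) (hD : IsUnit D)
    (d₁ ε : ℝ) (hd₁ : d₁ ≠ 0) (hε : d₁ + ε ≠ 0)
    (hinv : D⁻¹.mulVec (Pi.single 0 1) = (1 / d₁) • (Pi.single 0 1 : Fin 3 → ℝ))
    (w : Fin 3 → ℝ) :
    (D + ε • vecMulVec (Pi.single 0 1) (Pi.single 0 1)).mulVec
        (w - (ε * d₁ / (d₁ + ε) * w 0) • D⁻¹.mulVec (Pi.single 0 1))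
      = D.mulVec w := by
  have hdet : IsUnit D.det := (isUnit_iff_isUnit_det D).mp hD
  have hDe : D.mulVec (Pi.single 0 1) = d₁ • (Pi.single 0 1 : Fin 3 → ℝ) := by
    have h := congrArg (fun v => D.mulVec v) hinv
    simp only [mulVec_mulVec, Matrix.mul_nonsing_inv D hdet, one_mulVec, mulVec_smul] at h
    rw [one_div] at h
    exact (inv_smul_eq_iff₀ hd₁).mp h.symm
  rw [hinv]
  funext i
  simp only [add_mulVec, Pi.add_apply, mulVec_sub, Pi.sub_apply, mulVec_smul, Pi.smul_apply,
    smul_eq_mul, smul_mulVec, hDe, mulVec_smul]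
  simp [vecMulVec, mulVec, dotProduct, Fin.sum_univ_three, Pi.single_apply, mul_comm]
  fin_cases i <;> simp <;> field_simp <;> ring
end
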